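/- arXiv:2205.15473 — 3 statements merged into one kernel-verified Lean document; each statement's English description precedes it below -/
import Mathlib

section
/- Let n be a positive integer, let A and B be diagonal positive definite real n×n matrices, and let a, b ∈ ℝⁿ. For λ ∈ [0,1] define E_λ = λA + (1−λ)B and m_λ = E_λ⁻¹(λA a + (1−λ)B b). Then the function λ ↦ ‖m_λ − b‖_B is monotonically increasing on [0,1]; that is, for all 0 ≤ λ₁ ≤ λ₂ ≤ 1 one has ‖m_{λ₁} − b‖_B ≤ ‖m_{λ₂} − b‖_B. -/
/-!
For diagonal `A = diag dA` and `B = diag dB` everything decouples coordinatewise: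
`(m_λ - b)_i = w_i(λ) (a_i - b_i)` with the weight `w_i(λ) = λ dA_i / (λ dA_i + (1-λ) dB_i)`,
so `‖m_λ - b‖_B² = ∑ dB_i w_i(λ)² (a_i - b_i)²`. Each weight is nonnegative and increasing on
`[0,1]`, since its derivative has numerator `dA_i dB_i > 0`.
-/

open Matrix

/-- The path point `m_λ = (λA + (1-λ)B)⁻¹ (λA a + (1-λ)B b)`. -/
noncomputable def mPath {n : ℕ} (A B : Matrix (Fin n) (Fin n) ℝ) (a b : Fin n → ℝ)
    (lam : ℝ) : Fin n → ℝ :=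
  (lam • A + (1 - lam) • B)⁻¹ *ᵥ (lam • (A *ᵥ a) + (1 - lam) • (B *ᵥ b))

/-- The norm `‖w‖_M = √(wᵀ M w)`. -/
noncomputable def matNorm {n : ℕ} (M : Matrix (Fin n) (Fin n) ℝ) (w : Fin n → ℝ) : ℝ :=
  Real.sqrt (w ⬝ᵥ (M *ᵥ w))

/-- The weight of `a` in the coordinate `(λ p a + (1-λ) q b) / (λ p + (1-λ) q)`. -/
noncomputable def precisionWeight (p q x : ℝ) : ℝ :=
  x * p / (x * p + (1 - x) * q)

lemma convexComb_pos {p q x : ℝ} (hp : 0 < p) (hq : 0 < q) (hx : x ∈ Set.Icc (0 : ℝ) 1) :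
    0 < x * p + (1 - x) * q := by
  obtain ⟨hx0, hx1⟩ := hx
  rcases hx0.eq_or_lt with rfl | hx0
  · simpa using hq
  · nlinarith [mul_nonneg (sub_nonneg.2 hx1) hq.le]

lemma precisionWeight_nonneg {p q x : ℝ} (hp : 0 < p) (hq : 0 < q)
    (hx : x ∈ Set.Icc (0 : ℝ) 1) : 0 ≤ precisionWeight p q x :=
  div_nonneg (mul_nonneg hx.1 hp.le) (convexComb_pos hp hq hx).le

lemma monotoneOn_precisionWeight {p q : ℝ} (hp : 0 < p) (hq : 0 < q) :
    MonotoneOn (precisionWeight p q) (Set.Icc 0 1) := by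
  intro x hx y hy hxy
  rw [precisionWeight, precisionWeight,
    div_le_div_iff₀ (convexComb_pos hp hq hx) (convexComb_pos hp hq hy)]
  nlinarith [mul_nonneg (mul_nonneg (sub_nonneg.2 hxy) hp.le) hq.le]

lemma mPath_diagonal_sub_apply {n : ℕ} (dA dB a b : Fin n → ℝ) {l : ℝ}
    (hl : ∀ i, l * dA i + (1 - l) * dB i ≠ 0) (i : Fin n) :
    (mPath (diagonal dA) (diagonal dB) a b l - b) i
      = precisionWeight (dA i) (dB i) l * (a i - b i) := by
  have hE : l • diagonal dA + (1 - l) • diagonal dB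
      = diagonal fun j => l * dA j + (1 - l) * dB j := by
    rw [← diagonal_smul, ← diagonal_smul, diagonal_add]
    rfl
  have hEinv : (diagonal fun j => l * dA j + (1 - l) * dB j)⁻¹
      = diagonal fun j => (l * dA j + (1 - l) * dB j)⁻¹ :=
    inv_eq_right_inv <| by
      rw [diagonal_mul_diagonal, ← diagonal_one]
      exact congrArg diagonal (funext fun j => mul_inv_cancel₀ (hl j))
  rw [Pi.sub_apply, mPath, hE, hEinv, mulVec_diagonal]
  simp only [Pi.add_apply, Pi.smul_apply, mulVec_diagonal, smul_eq_mul]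
  rw [precisionWeight]
  field_simp [hl i]
  ring

lemma matNorm_diagonal_le_of_abs_le {n : ℕ} {d u v : Fin n → ℝ} (hd : ∀ i, 0 ≤ d i)
    (huv : ∀ i, |u i| ≤ |v i|) : matNorm (diagonal d) u ≤ matNorm (diagonal d) v := by
  refine Real.sqrt_le_sqrt (Finset.sum_le_sum fun i _ => ?_)
  rw [mulVec_diagonal, mulVec_diagonal, mul_left_comm, mul_left_comm (v i)]
  exact mul_le_mul_of_nonneg_left (abs_le_iff_mul_self_le.1 (huv i)) (hd i)

theorem mPath_norm_to_b_monotone_general {n : ℕ}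
    (A B : Matrix (Fin n) (Fin n) ℝ) (dA dB : Fin n → ℝ)
    (hA : A = Matrix.diagonal dA) (hB : B = Matrix.diagonal dB)
    (hdA : ∀ i, 0 < dA i) (hdB : ∀ i, 0 < dB i)
    (a b : Fin n → ℝ) :
    ∀ l1 l2 : ℝ, 0 ≤ l1 → l1 ≤ l2 → l2 ≤ 1 →
      matNorm B (mPath A B a b l1 - b) ≤ matNorm B (mPath A B a b l2 - b) := by
  subst hA hB
  intro l1 l2 h1 h12 h2
  have hl1 : l1 ∈ Set.Icc (0 : ℝ) 1 := ⟨h1, h12.trans h2⟩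
  have hl2 : l2 ∈ Set.Icc (0 : ℝ) 1 := ⟨h1.trans h12, h2⟩
  refine matNorm_diagonal_le_of_abs_le (fun i => (hdB i).le) fun i => ?_
  rw [mPath_diagonal_sub_apply dA dB a b (fun j => (convexComb_pos (hdA j) (hdB j) hl1).ne'),
    mPath_diagonal_sub_apply dA dB a b (fun j => (convexComb_pos (hdA j) (hdB j) hl2).ne'),
    abs_mul, abs_mul, abs_of_nonneg (precisionWeight_nonneg (hdA i) (hdB i) hl1),
    abs_of_nonneg (precisionWeight_nonneg (hdA i) (hdB i) hl2)]
  gcongr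
  exact monotoneOn_precisionWeight (hdA i) (hdB i) hl1 hl2 h12

theorem mPath_norm_to_b_monotone {n : ℕ} (hn : 0 < n)
    (A B : Matrix (Fin n) (Fin n) ℝ) (dA dB : Fin n → ℝ)
    (hA : A = Matrix.diagonal dA) (hB : B = Matrix.diagonal dB)
    (hdA : ∀ i, 0 < dA i) (hdB : ∀ i, 0 < dB i)
    (a b : Fin n → ℝ) :
    ∀ l1 l2 : ℝ, 0 ≤ l1 → l1 ≤ l2 → l2 ≤ 1 →
      matNorm B (mPath A B a b l1 - b) ≤ matNorm B (mPath A B a b l2 - b) :=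
  mPath_norm_to_b_monotone_general A B dA dB hA hB hdA hdB a b
end

section
/- Let n be a positive integer, let A and B be symmetric positive definite real n×n matrices, and let a, b ∈ ℝⁿ. For λ ∈ [0,1] define E_λ = λA + (1−λ)B and m_λ = E_λ⁻¹(λA a + (1−λ)B b). Then the ellipsoids E(A, a) and E(B, b) have nonempty intersection if and only if there exists λ ∈ [0,1] such that m_λ ∈ E(A, a) ∩ E(B, b). -/
open Matrix

/-- The ellipsoid `E(M, m) = {x | ‖x - m‖_M ≤ 1}`. -/
noncomputable def ellipsoid {n : ℕ} (M : Matrix (Fin n) (Fin n) ℝ) (m : Fin n → ℝ) :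
    Set (Fin n → ℝ) :=
  {x | matNorm M (x - m) ≤ 1}

/-!
The centre `m_λ` is the minimiser of the strictly convex quadratic
`x ↦ λ ‖x - a‖²_A + (1 - λ) ‖x - b‖²_B`, and expanding around it gives
`λ ‖x - a‖²_A + (1 - λ) ‖x - b‖²_B = λ ‖m_λ - a‖²_A + (1 - λ) ‖m_λ - b‖²_B + ‖x - m_λ‖²_{E_λ}`.
The function `λ ↦ ‖m_λ - a‖²_A - ‖m_λ - b‖²_B` is continuous on `[0, 1]`, nonnegative at `0`
(where `m_0 = b`) and nonpositive at `1` (where `m_1 = a`), so it vanishes at some `λ`.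
For a common point `x` of the two ellipsoids, both squared distances of `m_λ` then equal
the weighted sum above, which is at most `λ ‖x - a‖²_A + (1 - λ) ‖x - b‖²_B ≤ 1`.
-/

lemma mem_ellipsoid_iff {n : ℕ} {M : Matrix (Fin n) (Fin n) ℝ} {m x : Fin n → ℝ} :
    x ∈ ellipsoid M m ↔ (x - m) ⬝ᵥ (M *ᵥ (x - m)) ≤ 1 :=
  Real.sqrt_le_one

lemma Matrix.PosDef.smul_add_one_sub_smul {ι : Type*} {A B : Matrix ι ι ℝ} (hA : A.PosDef)
    (hB : B.PosDef) {l : ℝ} (hl₀ : 0 ≤ l) (hl₁ : l ≤ 1) : (l • A + (1 - l) • B).PosDef := by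
  rcases hl₀.eq_or_lt with rfl | hl₀
  · simpa using hB
  · exact (hA.smul hl₀).add_posSemidef (hB.posSemidef.smul (sub_nonneg.mpr hl₁))

section QuadraticForm

variable {ι : Type*} [Fintype ι]

lemma Matrix.IsHermitian.dotProduct_mulVec_comm {M : Matrix ι ι ℝ} (hM : M.IsHermitian)
    (u v : ι → ℝ) : u ⬝ᵥ (M *ᵥ v) = v ⬝ᵥ (M *ᵥ u) := by
  rw [dotProduct_mulVec, ← mulVec_transpose, dotProduct_comm,
    ← conjTranspose_eq_transpose_of_trivial, hM.eq]

lemma Matrix.IsHermitian.dotProduct_mulVec_add_add {M : Matrix ι ι ℝ} (hM : M.IsHermitian)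
    (u v : ι → ℝ) :
    (u + v) ⬝ᵥ (M *ᵥ (u + v)) = u ⬝ᵥ (M *ᵥ u) + 2 * (u ⬝ᵥ (M *ᵥ v)) + v ⬝ᵥ (M *ᵥ v) := by
  simp only [mulVec_add, dotProduct_add, add_dotProduct, hM.dotProduct_mulVec_comm v u]
  ring

lemma weighted_dotProduct_mulVec_eq_add {A B : Matrix ι ι ℝ} (hA : A.IsHermitian)
    (hB : B.IsHermitian) {s t : ℝ} {a b m : ι → ℝ}
    (hm : (s • A + t • B) *ᵥ m = s • (A *ᵥ a) + t • (B *ᵥ b)) (x : ι → ℝ) :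
    s * ((x - a) ⬝ᵥ (A *ᵥ (x - a))) + t * ((x - b) ⬝ᵥ (B *ᵥ (x - b))) =
      s * ((m - a) ⬝ᵥ (A *ᵥ (m - a))) + t * ((m - b) ⬝ᵥ (B *ᵥ (m - b))) +
        (x - m) ⬝ᵥ ((s • A + t • B) *ᵥ (x - m)) := by
  have hcrit : s • (A *ᵥ (m - a)) + t • (B *ᵥ (m - b)) = 0 := by
    rw [mulVec_sub, mulVec_sub, smul_sub, smul_sub, sub_add_sub_comm, ← smul_mulVec,
      ← smul_mulVec, ← add_mulVec, hm, sub_self]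
  have hcross : s * ((x - m) ⬝ᵥ (A *ᵥ (m - a))) + t * ((x - m) ⬝ᵥ (B *ᵥ (m - b))) = 0 := by
    simpa only [dotProduct_add, dotProduct_smul, smul_eq_mul, dotProduct_zero] using
      congrArg ((x - m) ⬝ᵥ ·) hcrit
  rw [← sub_add_sub_cancel x m a, ← sub_add_sub_cancel x m b, hA.dotProduct_mulVec_add_add,
    hB.dotProduct_mulVec_add_add]
  simp only [add_mulVec, smul_mulVec, dotProduct_add, dotProduct_smul, smul_eq_mul]
  linear_combination 2 * hcross

end QuadraticForm

section mPath

variable {n : ℕ} {A B : Matrix (Fin n) (Fin n) ℝ} {a b : Fin n → ℝ}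

lemma mulVec_mPath {l : ℝ} (h : IsUnit (l • A + (1 - l) • B).det) :
    (l • A + (1 - l) • B) *ᵥ mPath A B a b l = l • (A *ᵥ a) + (1 - l) • (B *ᵥ b) := by
  rw [mPath, mulVec_mulVec, mul_nonsing_inv _ h, one_mulVec]

lemma mPath_zero (hB : IsUnit B.det) : mPath A B a b 0 = b := by
  simp [mPath, mulVec_mulVec, nonsing_inv_mul _ hB]

lemma mPath_one (hA : IsUnit A.det) : mPath A B a b 1 = a := by
  simp [mPath, mulVec_mulVec, nonsing_inv_mul _ hA]

lemma continuousOn_mPath :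
    ContinuousOn (mPath A B a b) {l | (l • A + (1 - l) • B).det ≠ 0} := by
  intro l hl
  have hE : Continuous fun l : ℝ => l • A + (1 - l) • B := by fun_prop
  have hinv : ContinuousAt (fun l : ℝ => (l • A + (1 - l) • B)⁻¹) l :=
    (continuousAt_matrix_inv _ (by rw [Ring.inverse_eq_inv']; exact continuousAt_inv₀ hl)).comp
      hE.continuousAt
  exact ((continuous_fst.matrix_mulVec continuous_snd).continuousAt.comp
    (hinv.prodMk (by fun_prop))).continuousWithinAt

lemma weighted_dotProduct_mulVec_mPath_le (hA : A.PosDef) (hB : B.PosDef) {l : ℝ}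
    (hl₀ : 0 ≤ l) (hl₁ : l ≤ 1) (x : Fin n → ℝ) :
    l * ((mPath A B a b l - a) ⬝ᵥ (A *ᵥ (mPath A B a b l - a))) +
        (1 - l) * ((mPath A B a b l - b) ⬝ᵥ (B *ᵥ (mPath A B a b l - b))) ≤
      l * ((x - a) ⬝ᵥ (A *ᵥ (x - a))) + (1 - l) * ((x - b) ⬝ᵥ (B *ᵥ (x - b))) := by
  have hE := hA.smul_add_one_sub_smul hB hl₀ hl₁
  rw [weighted_dotProduct_mulVec_eq_add hA.isHermitian hB.isHermitian
    (mulVec_mPath hE.det_pos.ne'.isUnit) x]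
  simpa using hE.posSemidef.dotProduct_mulVec_nonneg (x - mPath A B a b l)

lemma exists_mPath_dotProduct_mulVec_eq (hA : A.PosDef) (hB : B.PosDef) :
    ∃ l ∈ Set.Icc (0 : ℝ) 1,
      (mPath A B a b l - a) ⬝ᵥ (A *ᵥ (mPath A B a b l - a)) =
        (mPath A B a b l - b) ⬝ᵥ (B *ᵥ (mPath A B a b l - b)) := by
  have hm : ContinuousOn (mPath A B a b) (Set.Icc 0 1) :=
    continuousOn_mPath.mono fun l hl => (hA.smul_add_one_sub_smul hB hl.1 hl.2).det_pos.ne'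
  let F : ℝ → ℝ := fun l => (mPath A B a b l - a) ⬝ᵥ (A *ᵥ (mPath A B a b l - a)) -
    (mPath A B a b l - b) ⬝ᵥ (B *ᵥ (mPath A B a b l - b))
  have hF : ContinuousOn F (Set.Icc 0 1) := by fun_prop
  have hF₀ : 0 ≤ F 0 := by
    simpa [F, mPath_zero hB.det_pos.ne'.isUnit] using
      hA.posSemidef.dotProduct_mulVec_nonneg (b - a)
  have hF₁ : F 1 ≤ 0 := by
    simpa [F, mPath_one hA.det_pos.ne'.isUnit] using
      hB.posSemidef.dotProduct_mulVec_nonneg (a - b)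
  obtain ⟨l, hl, hFl⟩ := intermediate_value_Icc' zero_le_one hF ⟨hF₁, hF₀⟩
  exact ⟨l, hl, sub_eq_zero.mp hFl⟩

end mPath

theorem ellipsoids_intersect_iff_mPath_witness_general {n : ℕ}
    (A B : Matrix (Fin n) (Fin n) ℝ)
    (hA : A.PosDef) (hB : B.PosDef)
    (a b : Fin n → ℝ) :
    (ellipsoid A a ∩ ellipsoid B b).Nonempty ↔
      ∃ lam : ℝ, 0 ≤ lam ∧ lam ≤ 1 ∧
        mPath A B a b lam ∈ ellipsoid A a ∩ ellipsoid B b := by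
  refine ⟨fun ⟨x, hxA, hxB⟩ => ?_, fun ⟨l, _, _, hl⟩ => ⟨_, hl⟩⟩
  obtain ⟨l, ⟨hl₀, hl₁⟩, hdist⟩ := exists_mPath_dotProduct_mulVec_eq (a := a) (b := b) hA hB
  have hle := weighted_dotProduct_mulVec_mPath_le (a := a) (b := b) hA hB hl₀ hl₁ x
  rw [← hdist] at hle
  rw [mem_ellipsoid_iff] at hxA hxB
  have hdist_le : (mPath A B a b l - a) ⬝ᵥ (A *ᵥ (mPath A B a b l - a)) ≤ 1 := by nlinarith
  exact ⟨l, hl₀, hl₁, mem_ellipsoid_iff.mpr hdist_le, mem_ellipsoid_iff.mpr (hdist ▸ hdist_le)⟩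

theorem ellipsoids_intersect_iff_mPath_witness {n : ℕ} (hn : 0 < n)
    (A B : Matrix (Fin n) (Fin n) ℝ)
    (hA : A.PosDef) (hB : B.PosDef)
    (a b : Fin n → ℝ) :
    (ellipsoid A a ∩ ellipsoid B b).Nonempty ↔
      ∃ lam : ℝ, 0 ≤ lam ∧ lam ≤ 1 ∧
        mPath A B a b lam ∈ ellipsoid A a ∩ ellipsoid B b :=
  ellipsoids_intersect_iff_mPath_witness_general A B hA hB a b
end

section
/- Let n be a positive integer, let A and B be diagonal positive definite real n×n matrices, and let a, b ∈ ℝⁿ. For λ ∈ [0,1] define m_λ = (λA + (1−λ)B)⁻¹(λA a + (1−λ)B b). Then for every λ ∈ [0,1], ‖m_λ − b‖_B ≤ ‖a − b‖_B; that is, along the entire path the B-norm distance of m_λ from b never exceeds that of the endpoint m_1 = a. -/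
open Matrix

/-
For diagonal `A = diag α`, `B = diag β` everything decouples coordinatewise: with
`d = λα + (1-λ)β`, the `i`-th coordinate of `m_λ - b` is `(λ αᵢ / dᵢ) (aᵢ - bᵢ)`, a shrinking
of `aᵢ - bᵢ` by a factor in `[0, 1]`. Shrinking every coordinate cannot increase a diagonal
positive semidefinite norm.
-/

namespace Matrix

variable {ι : Type*} [Fintype ι] [DecidableEq ι]

theorem inv_diagonal_of_ne_zero {K : Type*} [Field K] {d : ι → K} (hd : ∀ i, d i ≠ 0) :
    (diagonal d)⁻¹ = diagonal d⁻¹ := by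
  refine inv_eq_right_inv ?_
  rw [diagonal_mul_diagonal, ← diagonal_one]
  exact congrArg diagonal (funext fun i => mul_inv_cancel₀ (hd i))

theorem dotProduct_diagonal_mulVec_self {R : Type*} [CommSemiring R] (d w : ι → R) :
    w ⬝ᵥ (diagonal d *ᵥ w) = ∑ i, d i * w i ^ 2 := by
  simp only [dotProduct, mulVec_diagonal]
  exact Finset.sum_congr rfl fun i _ => by ring

theorem dotProduct_diagonal_mulVec_mul_le {d c w : ι → ℝ} (hd : ∀ i, 0 ≤ d i)
    (hc : ∀ i, |c i| ≤ 1) :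
    (c * w) ⬝ᵥ (diagonal d *ᵥ (c * w)) ≤ w ⬝ᵥ (diagonal d *ᵥ w) := by
  simp only [dotProduct_diagonal_mulVec_self, Pi.mul_apply]
  refine Finset.sum_le_sum fun i _ => mul_le_mul_of_nonneg_left ?_ (hd i)
  rw [mul_pow]
  exact mul_le_of_le_one_left (sq_nonneg _) ((sq_le_one_iff_abs_le_one _).2 (hc i))

end Matrix

variable {n : ℕ}

theorem matNorm_diagonal_mul_le {d c w : Fin n → ℝ} (hd : ∀ i, 0 ≤ d i)
    (hc : ∀ i, |c i| ≤ 1) :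
    matNorm (diagonal d) (c * w) ≤ matNorm (diagonal d) w :=
  Real.sqrt_le_sqrt (dotProduct_diagonal_mulVec_mul_le hd hc)

theorem mPath_diagonal (dA dB a b : Fin n → ℝ) {lam : ℝ}
    (hd : ∀ i, lam * dA i + (1 - lam) * dB i ≠ 0) :
    mPath (diagonal dA) (diagonal dB) a b lam =
      fun i => (lam * dA i * a i + (1 - lam) * dB i * b i) / (lam * dA i + (1 - lam) * dB i) := by
  have hsum : lam • diagonal dA + (1 - lam) • diagonal dB =
      diagonal fun i => lam * dA i + (1 - lam) * dB i := by
    rw [← diagonal_smul, ← diagonal_smul, diagonal_add]; rfl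
  rw [mPath, hsum, inv_diagonal_of_ne_zero hd]
  ext i
  simp only [mulVec_diagonal, Pi.add_apply, Pi.smul_apply, Pi.inv_apply, smul_eq_mul]
  field_simp

theorem mPath_diagonal_sub_right (dA dB a b : Fin n → ℝ) {lam : ℝ}
    (hd : ∀ i, lam * dA i + (1 - lam) * dB i ≠ 0) :
    mPath (diagonal dA) (diagonal dB) a b lam - b =
      (fun i => lam * dA i / (lam * dA i + (1 - lam) * dB i)) * (a - b) := by
  rw [mPath_diagonal dA dB a b hd]
  ext i
  simp only [Pi.sub_apply, Pi.mul_apply]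
  field_simp [hd i]
  ring

theorem abs_div_add_le_one {x y : ℝ} (hx : 0 ≤ x) (hy : 0 ≤ y) : |x / (x + y)| ≤ 1 := by
  rw [abs_of_nonneg (div_nonneg hx (add_nonneg hx hy))]
  exact div_le_one_of_le₀ (le_add_of_nonneg_right hy) (add_nonneg hx hy)

theorem mul_add_one_sub_mul_pos {α β lam : ℝ} (hα : 0 < α) (hβ : 0 < β)
    (h0 : 0 ≤ lam) (h1 : lam ≤ 1) : 0 < lam * α + (1 - lam) * β := by
  rcases h0.eq_or_lt with rfl | hlam
  · simpa using hβ
  · exact add_pos_of_pos_of_nonneg (mul_pos hlam hα) (mul_nonneg (sub_nonneg.2 h1) hβ.le)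

theorem mPath_norm_le_endpoint_general {n : ℕ}
    (A B : Matrix (Fin n) (Fin n) ℝ) (dA dB : Fin n → ℝ)
    (hA : A = Matrix.diagonal dA) (hB : B = Matrix.diagonal dB)
    (hdA : ∀ i, 0 < dA i) (hdB : ∀ i, 0 < dB i)
    (a b : Fin n → ℝ) :
    ∀ lam : ℝ, 0 ≤ lam → lam ≤ 1 →
      matNorm B (mPath A B a b lam - b) ≤ matNorm B (a - b) := by
  intro lam h0 h1
  subst hA hB
  have hd : ∀ i, 0 < lam * dA i + (1 - lam) * dB i := fun i =>
    mul_add_one_sub_mul_pos (hdA i) (hdB i) h0 h1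
  rw [mPath_diagonal_sub_right dA dB a b fun i => (hd i).ne']
  exact matNorm_diagonal_mul_le (fun i => (hdB i).le)
    fun i => abs_div_add_le_one (mul_nonneg h0 (hdA i).le)
      (mul_nonneg (sub_nonneg.2 h1) (hdB i).le)

theorem mPath_norm_le_endpoint {n : ℕ} (hn : 0 < n)
    (A B : Matrix (Fin n) (Fin n) ℝ) (dA dB : Fin n → ℝ)
    (hA : A = Matrix.diagonal dA) (hB : B = Matrix.diagonal dB)
    (hdA : ∀ i, 0 < dA i) (hdB : ∀ i, 0 < dB i)
    (a b : Fin n → ℝ) :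
    ∀ lam : ℝ, 0 ≤ lam → lam ≤ 1 →
      matNorm B (mPath A B a b lam - b) ≤ matNorm B (a - b) :=
  mPath_norm_le_endpoint_general A B dA dB hA hB hdA hdB a b
end
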